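/- arXiv:1704.08037 — 7 statements merged into one kernel-verified Lean document; each statement's English description precedes it below -/
import Mathlib

section
/- Let A be a nonscalar n×n matrix over a field F with n ≥ 3, and let γ ∈ F. Then there exists an invertible matrix P such that P·A·P⁻¹ has (1,1) entry equal to γ and its lower-right (n−1)×(n−1) principal submatrix is nonscalar. -/
/-! Conjugating by the transvection `1 + t E₀₁` adds `t` times the `(1,0)` entry to the `(0,0)`
entry, so once some conjugate of `A` has a nonzero `(1,0)` entry (a nonscalar matrix always has a
conjugate with a nonzero off-diagonal entry, which a permutation moves to `(1,0)`), the `(0,0)`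
entry can be made `γ`. Two more transvections, chosen not to disturb `(0,0)`, then put a nonzero
entry at `(1,2)`, which lies off the diagonal of the lower-right block. -/

open Equiv

namespace Matrix

variable {m R : Type*} [Fintype m] [DecidableEq m]

section CommRing

variable [CommRing R]

theorem isConj_submatrix_perm (A : Matrix m m R) (σ : Perm m) : IsConj A (A.submatrix σ σ) := by
  refine ⟨(permMatrixHom (n := m) (R := R)).toHomUnits σ⁻¹, ?_⟩
  simp only [SemiconjBy, MonoidHom.coe_toHomUnits, permMatrixHom_apply, inv_inv, Perm.permMatrix,
    PEquiv.toMatrix_toPEquiv_mul, PEquiv.mul_toMatrix_toPEquiv, submatrix_submatrix]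
  simp

theorem isConj_transvection_mul_mul (A : Matrix m m R) {i j : m} (hij : i ≠ j) (c : R) :
    IsConj A (transvection i j c * A * transvection i j (-c)) := by
  let T : (Matrix m m R)ˣ :=
    { val := transvection i j c
      inv := transvection i j (-c)
      val_inv := by simp [transvection_mul_transvection_same _ _ hij]
      inv_val := by simp [transvection_mul_transvection_same _ _ hij] }
  exact ⟨T, by simp [SemiconjBy, T, Matrix.mul_assoc, transvection_mul_transvection_same _ _ hij]⟩

theorem exists_isConj_offDiag_ne_zero {A : Matrix m m R} (hA : ∀ c : R, A ≠ c • 1) :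
    ∃ B, IsConj A B ∧ ∃ i j, i ≠ j ∧ B i j ≠ 0 := by
  by_cases hoff : ∃ i j, i ≠ j ∧ A i j ≠ 0
  · exact ⟨A, .refl A, hoff⟩
  push Not at hoff
  obtain ⟨i, j, hdiag⟩ : ∃ i j, A i i ≠ A j j := by
    by_contra! h
    rcases isEmpty_or_nonempty m with hm | ⟨⟨k⟩⟩
    · exact hA 0 (Subsingleton.elim _ _)
    · refine hA (A k k) (ext fun i j => ?_)
      rcases eq_or_ne i j with rfl | hij
      · simp [h i k]
      · simp [hoff i j hij, hij]
  have hij : i ≠ j := by rintro rfl; exact hdiag rfl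
  -- conjugating the diagonal matrix by `1 + E i j` puts `A j j - A i i` at `(i, j)`
  refine ⟨_, isConj_transvection_mul_mul A hij 1, i, j, hij, ?_⟩
  simpa [hoff i j hij, hoff j i hij.symm, hij, add_neg_eq_zero, eq_comm] using hdiag

theorem exists_isConj_apply_ne_zero {A : Matrix m m R} (hA : ∀ c : R, A ≠ c • 1) {a b : m}
    (hab : a ≠ b) : ∃ B, IsConj A B ∧ B a b ≠ 0 := by
  obtain ⟨B, hAB, i, j, hij, hBij⟩ := exists_isConj_offDiag_ne_zero hA
  obtain ⟨σ, hσ⟩ := Perm.exists_extending_pair ![a, b] ![i, j]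
    (by simp [Function.Injective, Fin.forall_fin_two, hab, hab.symm])
    (by simp [Function.Injective, Fin.forall_fin_two, hij, hij.symm])
  have ha : σ a = i := hσ 0
  have hb : σ b = j := hσ 1
  exact ⟨B.submatrix σ σ, hAB.trans (isConj_submatrix_perm B σ), by simpa [ha, hb] using hBij⟩

end CommRing

section Field

variable {F : Type*} [Field F]

theorem exists_isConj_apply_self_eq {B : Matrix m m F} {a b : m} (hab : a ≠ b) (hba : B b a ≠ 0)
    (γ : F) : ∃ C, IsConj B C ∧ C a a = γ ∧ C b a ≠ 0 := by
  refine ⟨_, isConj_transvection_mul_mul B hab ((γ - B a a) / B b a), ?_, ?_⟩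
  · simp [hab, div_mul_cancel₀ _ hba]
  · simpa [hab, hab.symm] using hba

theorem exists_isConj_apply_self_eq_self_and_apply_eq_one {B : Matrix m m F} {a b c : m}
    (hab : a ≠ b) (hac : a ≠ c) (hbc : b ≠ c) (hba : B b a ≠ 0) :
    ∃ C, IsConj B C ∧ C a a = B a a ∧ C b c = 1 := by
  -- clearing `(c, a)` first makes the second transvection, which adds a multiple of row `c` to
  -- row `a`, leave `(a, a)` unchanged
  set D := transvection c b (-B c a / B b a) * B * transvection c b (B c a / B b a)
  have hBD : IsConj B D := by
    simpa [D, neg_div] using isConj_transvection_mul_mul B hbc.symm (-B c a / B b a)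
  have hDaa : D a a = B a a := by simp [D, hab, hac]
  have hDca : D c a = 0 := by simp [D, hab, div_mul_cancel₀ _ hba]
  have hDba : D b a = B b a := by simp [D, hab, hbc]
  set t := (D b c - 1) / D b a
  refine ⟨_, hBD.trans (isConj_transvection_mul_mul D hac t), ?_, ?_⟩
  · simp [hac, hDca, hDaa]
  · simp [hab.symm, t, hDba, div_mul_cancel₀ _ hba]

end Field

end Matrix

open Matrix in
theorem stmt_1 {F : Type*} [Field F] {n : ℕ}
    (A : Matrix (Fin (n + 3)) (Fin (n + 3)) F)
    (hA : ∀ c : F, A ≠ c • (1 : Matrix (Fin (n + 3)) (Fin (n + 3)) F)) (γ : F) :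
    ∃ P : (Matrix (Fin (n + 3)) (Fin (n + 3)) F)ˣ,
      (P.val * A * P⁻¹.val) 0 0 = γ ∧
      ∀ c : F, (P.val * A * P⁻¹.val).submatrix Fin.succ Fin.succ ≠
        c • (1 : Matrix (Fin (n + 2)) (Fin (n + 2)) F) := by
  have h01 : (0 : Fin (n + 3)) ≠ 1 := by simp
  have h02 : (0 : Fin (n + 3)) ≠ 2 := by simp [Fin.ext_iff, Nat.mod_eq_of_lt]
  have h12 : (1 : Fin (n + 3)) ≠ 2 := by simp [Fin.ext_iff, Nat.mod_eq_of_lt]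
  obtain ⟨B, hAB, hB⟩ := exists_isConj_apply_ne_zero hA h01.symm
  obtain ⟨C, hBC, hC00, hC10⟩ := exists_isConj_apply_self_eq h01 hB γ
  obtain ⟨D, hCD, hD00, hD12⟩ :=
    exists_isConj_apply_self_eq_self_and_apply_eq_one h01 h02 h12 hC10
  obtain ⟨P, hP⟩ := hAB.trans hBC |>.trans hCD
  have hPD : P.val * A * P⁻¹.val = D := (Units.mul_inv_eq_iff_eq_mul P).mpr hP
  refine ⟨P, by rw [hPD, hD00, hC00], fun c hc => ?_⟩
  rw [hPD] at hc
  simpa [hD12] using congr_fun₂ hc 0 1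
end

section
/- Let A be a nonscalar 2×2 matrix over a field F and let γ ∈ F. Then A is similar to a matrix with diagonal (γ, tr(A) − γ). -/
/-!
Since `A - γ • 1` is not scalar, some vector `v` is not an eigenvector of it, so
`v, (A - γ • 1) v` is a basis. In that basis `A v = γ v + (A - γ • 1) v` has first coordinate `γ`,
and the other diagonal entry is then forced by the invariance of the trace.
-/

open Matrix Module

theorem Matrix.exists_linearIndependent_mulVec_of_ne_smul_one {n R : Type*} [Fintype n]
    [DecidableEq n] [CommRing R] [IsDomain R] (A : Matrix n n R)
    (hA : ∀ c : R, A ≠ c • 1) : ∃ v : n → R, LinearIndependent R ![v, A *ᵥ v] := by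
  by_contra! h
  obtain ⟨c, hc⟩ := (toLin' A).exists_eq_smul_id_of_forall_notLinearIndependent h
  refine hA c ?_
  rw [← LinearMap.toMatrix'_toLin' A, hc, map_smul, LinearMap.toMatrix'_one]

theorem Matrix.exists_units_conj_eq_toMatrix {ι R : Type*} [Fintype ι] [DecidableEq ι]
    [CommRing R] (A : Matrix ι ι R) (b : Basis ι R (ι → R)) :
    ∃ P : (Matrix ι ι R)ˣ, P.val * A * P⁻¹.val = LinearMap.toMatrix b b (toLin' A) := by
  refine ⟨⟨b.toMatrix (Pi.basisFun R ι), (Pi.basisFun R ι).toMatrix b,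
    b.toMatrix_mul_toMatrix_flip _, Basis.toMatrix_mul_toMatrix_flip _ _⟩, ?_⟩
  rw [Units.val_mk, Units.inv_mk, ← basis_toMatrix_mul_linearMap_toMatrix_mul_basis_toMatrix b
    (Pi.basisFun R ι) b (Pi.basisFun R ι), LinearMap.toMatrix_eq_toMatrix',
    LinearMap.toMatrix'_toLin']

theorem Matrix.exists_units_conj_apply_zero_zero_eq {K : Type*} [Field K]
    (A : Matrix (Fin 2) (Fin 2) K) (hA : ∀ c : K, A ≠ c • 1) (γ : K) :
    ∃ P : (Matrix (Fin 2) (Fin 2) K)ˣ, (P.val * A * P⁻¹.val) 0 0 = γ := by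
  obtain ⟨v, hv⟩ := (A - γ • 1).exists_linearIndependent_mulVec_of_ne_smul_one fun c h ↦
    hA (c + γ) (by rw [add_smul, ← h, sub_add_cancel])
  let b := basisOfLinearIndependentOfCardEqFinrank hv (by simp)
  have hAb : toLin' A (b 0) = γ • b 0 + b 1 := by
    simp [b, sub_mulVec, smul_mulVec]
  obtain ⟨P, hP⟩ := A.exists_units_conj_eq_toMatrix b
  refine ⟨P, ?_⟩
  rw [hP, LinearMap.toMatrix_apply, hAb]
  simp

theorem stmt_2 {F : Type*} [Field F]
    (A : Matrix (Fin 2) (Fin 2) F)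
    (hA : ∀ c : F, A ≠ c • (1 : Matrix (Fin 2) (Fin 2) F)) (γ : F) :
    ∃ P : (Matrix (Fin 2) (Fin 2) F)ˣ,
      (P.val * A * P⁻¹.val) 0 0 = γ ∧ (P.val * A * P⁻¹.val) 1 1 = A.trace - γ := by
  obtain ⟨P, hP⟩ := A.exists_units_conj_apply_zero_zero_eq hA γ
  refine ⟨P, hP, ?_⟩
  have htrace := trace_units_conj P A
  rw [trace_fin_two, hP] at htrace
  exact eq_sub_of_add_eq' htrace
end

section
/- Let A = (a_ij) be an n×n matrix over a field F with a nonzero off-diagonal entry a_rs (r ≠ s). Let B be the matrix equal to the identity except on row s, where b_sr = 0, b_ss = a_rs, and b_sk = a_rk − 1 for k ∉ {r,s}. Then B is invertible and every off-diagonal entry of row r of B·A·B⁻¹ equals 1. -/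
/-!
`B` is the identity with row `s` replaced by `v = (a_r1 - 1, …, 0, …, a_rs, …, a_rn - 1)`, so
`det B = v s = a_rs`. Row `r ≠ s` of `B` is `e_r`, hence row `r` of `B A B⁻¹` is `A r ᵥ* B⁻¹`.
Taking `y` equal to `1` except `y r = a_rr`, one checks `A r = y ᵥ* B`, so this row is `y`.
-/

namespace Matrix

variable {m n R : Type*} [Fintype m] [DecidableEq m] [CommRing R]

theorem vecMul_updateRow (y : m → R) (M : Matrix m n R) (s : m) (v : n → R) :
    y ᵥ* M.updateRow s v = Function.update y s 0 ᵥ* M + y s • v := by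
  ext j
  simp only [vecMul, dotProduct, updateRow_apply, Pi.add_apply, Pi.smul_apply, smul_eq_mul,
    Function.update_apply]
  rw [← Finset.add_sum_erase _ _ (Finset.mem_univ s), ← Finset.add_sum_erase _ _ (Finset.mem_univ s),
    if_pos rfl, if_pos rfl, zero_mul, zero_add, add_comm]
  congr 1
  exact Finset.sum_congr rfl fun i hi => by simp [Finset.ne_of_mem_erase hi]

theorem det_one_updateRow (s : m) (v : m → R) : ((1 : Matrix m m R).updateRow s v).det = v s := by
  simpa [← vecMul_eq_sum] using det_updateRow_sum (1 : Matrix m m R) s v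

theorem updateRow_one_mul_apply_of_ne {r s : m} (hrs : r ≠ s) (v : m → R) (A : Matrix m n R) :
    ((1 : Matrix m m R).updateRow s v * A) r = A r := by
  rw [updateRow_mul, updateRow_ne hrs, Matrix.one_mul]

end Matrix

theorem stmt_5 {F : Type*} [Field F] {n : ℕ}
    (A : Matrix (Fin n) (Fin n) F)
    (r s : Fin n) (hrs : r ≠ s) (hArs : A r s ≠ 0)
    (B : Matrix (Fin n) (Fin n) F)
    (hB : B = Matrix.of fun i j =>
      if i = s then (if j = r then 0 else if j = s then A r s else A r j - 1)
      else (1 : Matrix (Fin n) (Fin n) F) i j) :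
    IsUnit B ∧ ∀ k, k ≠ r → (B * A * B⁻¹) r k = 1 := by
  set v : Fin n → F := fun j => if j = r then 0 else if j = s then A r s else A r j - 1
  have hBv : B = (1 : Matrix (Fin n) (Fin n) F).updateRow s v := by
    ext i j
    by_cases hi : i = s <;> simp [hB, v, Matrix.updateRow_apply, hi]
  have hdet : IsUnit B.det := by
    rw [hBv, Matrix.det_one_updateRow]
    simpa [v, hrs.symm] using hArs
  set y : Fin n → F := Function.update 1 r (A r r)
  have hrow : A r = Matrix.vecMul y B := by
    ext j
    rw [hBv, Matrix.vecMul_updateRow]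
    by_cases hjr : j = r
    · subst hjr; simp [y, v, hrs]
    by_cases hjs : j = s
    · subst hjs; simp [y, v, hrs.symm]
    · simp [y, v, hjr, hjs, hrs.symm]
  have hconj : (B * A * B⁻¹) r = y := by
    rw [Matrix.mul_apply_eq_vecMul, hBv, Matrix.updateRow_one_mul_apply_of_ne hrs, ← hBv, hrow,
      Matrix.vecMul_vecMul, Matrix.mul_nonsing_inv B hdet, Matrix.vecMul_one]
  refine ⟨(Matrix.isUnit_iff_isUnit_det B).mpr hdet, fun k hk => ?_⟩
  simp [hconj, y, hk]
end

section
/- Let A = (a_ij) be an n×n matrix over a field F such that for some index r all off-diagonal entries of row r equal 1. Let γ₁, ..., γₙ ∈ F satisfy γ₁ + ⋯ + γₙ = tr(A). Let B be the matrix equal to the identity except on column r, where b_kr = γ_k − a_kk for k ≠ r (and b_rr = 1). Then B is invertible and the diagonal of B·A·B⁻¹ is (γ₁, ..., γₙ). -/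
/-!
Write `B = 1 + c e_rᵀ` with `c r = 0`. Then `N = c e_rᵀ` squares to zero, so `B⁻¹ = 1 - N`, and
since `c i * (e_r) i = 0` for every `i` the diagonal of `B A B⁻¹` is `A i i + c i * A r i`, minus
`(A c) r` in position `r`. Off `r` this is `γ i` because `A r i = 1`; at `r`, the same row condition
gives `(A c) r = ∑ c = ∑_{k ≠ r} (γ k - A k k)`, which the trace condition turns into `A r r - γ r`.
-/

open Matrix

section SquareZero

variable {R : Type*} [Ring R]

theorem one_add_mul_mul_one_sub (N A : R) :
    (1 + N) * A * (1 - N) = A + N * A - A * N - N * A * N := by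
  noncomm_ring

theorem one_add_mul_one_sub_of_mul_self_eq_zero {N : R} (h : N * N = 0) :
    (1 + N) * (1 - N) = 1 := by
  rw [mul_sub, mul_one, add_mul, one_mul, h, add_zero, add_sub_cancel_right]

end SquareZero

namespace Matrix

variable {m R : Type*} [Fintype m] [CommRing R]

theorem vecMulVec_mul_self_eq_zero {u v : m → R} (h : v ⬝ᵥ u = 0) :
    vecMulVec u v * vecMulVec u v = 0 := by
  rw [vecMulVec_mul_vecMulVec, h, zero_smul]
  ext i j
  simp [vecMulVec_apply]

theorem mulVec_apply_of_row_eq_one {A : Matrix m m R} {r : m} (hrow : ∀ k, k ≠ r → A r k = 1)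
    {c : m → R} (hc : c r = 0) : (A *ᵥ c) r = ∑ k, c k := by
  refine Finset.sum_congr rfl fun k _ => ?_
  rcases eq_or_ne k r with rfl | hk
  · simp [hc]
  · exact (congrArg (· * c k) (hrow k hk)).trans (one_mul _)

variable [DecidableEq m]

theorem isUnit_one_add_vecMulVec {u v : m → R} (h : v ⬝ᵥ u = 0) :
    IsUnit (1 + vecMulVec u v) :=
  IsNilpotent.isUnit_one_add ⟨2, by rw [pow_two, vecMulVec_mul_self_eq_zero h]⟩

theorem inv_one_add_vecMulVec {u v : m → R} (h : v ⬝ᵥ u = 0) :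
    (1 + vecMulVec u v)⁻¹ = 1 - vecMulVec u v :=
  inv_eq_right_inv (one_add_mul_one_sub_of_mul_self_eq_zero (vecMulVec_mul_self_eq_zero h))

theorem conj_one_add_vecMulVec_apply_self (A : Matrix m m R) {u v : m → R}
    (h : ∀ i, u i * v i = 0) (i : m) :
    ((1 + vecMulVec u v) * A * (1 + vecMulVec u v)⁻¹) i i
      = A i i + u i * (v ᵥ* A) i - (A *ᵥ u) i * v i := by
  have hvu : v ⬝ᵥ u = 0 := Finset.sum_eq_zero fun i _ => by rw [mul_comm, h]
  rw [inv_one_add_vecMulVec hvu, one_add_mul_mul_one_sub, vecMulVec_mul, mul_vecMulVec,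
    vecMulVec_mul, vecMul_vecMulVec]
  simp [vecMulVec_apply, h i]

end Matrix

theorem stmt_6 {F : Type*} [Field F] {n : ℕ}
    (A : Matrix (Fin n) (Fin n) F) (r : Fin n)
    (hrow : ∀ k, k ≠ r → A r k = 1)
    (γ : Fin n → F) (hγ : ∑ i, γ i = A.trace)
    (B : Matrix (Fin n) (Fin n) F)
    (hB : B = Matrix.of fun i j =>
      if j = r then (if i = r then 1 else γ i - A i i)
      else (1 : Matrix (Fin n) (Fin n) F) i j) :
    IsUnit B ∧ ∀ i, (B * A * B⁻¹) i i = γ i := by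
  set c : Fin n → F := Function.update (fun i => γ i - A i i) r 0 with hc
  have hcr : c r = 0 := Function.update_self _ _ _
  have hBc : B = 1 + vecMulVec c (Pi.single r 1) := by
    subst hB
    ext i j
    by_cases hj : j = r <;> by_cases hi : i = r <;> simp [c, vecMulVec_apply, one_apply, hi, hj]
  have hc_single : ∀ i, c i * (Pi.single r 1 : Fin n → F) i = 0 := by
    intro i
    rcases eq_or_ne i r with rfl | hi <;> simp [*]
  refine ⟨hBc ▸ isUnit_one_add_vecMulVec (by simp [hcr]), fun i => ?_⟩
  rw [hBc, conj_one_add_vecMulVec_apply_self A hc_single, single_one_vecMul]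
  rcases eq_or_ne i r with rfl | hi
  · have hsum : ∑ k, c k = A i i - γ i := by
      have hγi := Finset.sum_eq_add_sum_sdiff_singleton_of_mem (Finset.mem_univ i) γ
      have htr := Finset.sum_eq_add_sum_sdiff_singleton_of_mem (Finset.mem_univ i) fun k => A k k
      simp only [trace, diag_apply] at hγ
      rw [hc, Finset.sum_update_of_mem (Finset.mem_univ i), zero_add, Finset.sum_sub_distrib]
      linear_combination hγ - hγi + htr
    rw [mulVec_apply_of_row_eq_one hrow hcr, hsum, hcr, Pi.single_eq_same]
    ring
  · simp [c, hi, hrow i hi]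
end

section
/- Let A be a non-diagonal n×n matrix over a field F and let γ₁, ..., γₙ ∈ F with γ₁ + ⋯ + γₙ = tr(A). Then there exist invertible matrices B₁ and B₂ such that B₂·B₁·A·B₁⁻¹·B₂⁻¹ has diagonal (γ₁, ..., γₙ). -/
/-!
Conjugating by `S = 1 + e_j cᵀ` with `cᵀ = (1 - A_{i·}) / A_{ij}` fixes the row vector `e_iᵀ`, so
the `i`-th row of `S⁻¹ A S` is `A_{i·} S = A_{i·} + A_{ij} cᵀ`, which is `1` off the diagonal.
Once row `i` of `M` is `1` off the diagonal, conjugating by `1 + t e_iᵀ` with `t_i = 0` adds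
`t_p M_{ip} = t_p` to each diagonal entry `p ≠ i`, so `t_p = γ_p - M_{pp}` fixes those entries;
the `i`-th one is then `γ_i` because conjugation preserves the trace.
-/

namespace Matrix

variable {ι R : Type*} [Fintype ι] [DecidableEq ι] [CommRing R]

omit [DecidableEq ι] in
lemma vecMulVec_mul_self (u v : ι → R) :
    vecMulVec u v * vecMulVec u v = (v ⬝ᵥ u) • vecMulVec u v := by
  rw [vecMulVec_mul_vecMulVec, vecMulVec_smul]

/-- Sherman–Morrison: `(1 + u vᵀ)⁻¹ = 1 - (1 + vᵀu)⁻¹ u vᵀ`. -/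
noncomputable def oneAddVecMulVecUnit (u v : ι → R) (h : IsUnit (1 + v ⬝ᵥ u)) :
    (Matrix ι ι R)ˣ where
  val := 1 + vecMulVec u v
  inv := 1 - Ring.inverse (1 + v ⬝ᵥ u) • vecMulVec u v
  val_inv := by
    rw [mul_sub, mul_one, add_mul, one_mul, mul_smul_comm, vecMulVec_mul_self]
    linear_combination (norm := module) -(Ring.inverse_mul_cancel _ h • vecMulVec u v)
  inv_val := by
    rw [sub_mul, one_mul, mul_add, mul_one, smul_mul_assoc, vecMulVec_mul_self]
    linear_combination (norm := module) -(Ring.inverse_mul_cancel _ h • vecMulVec u v)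

lemma vecMul_units_inv_conj_of_vecMul_eq_self {S : (Matrix ι ι R)ˣ} {x : ι → R}
    (hx : x ᵥ* S.val = x) (A : Matrix ι ι R) :
    x ᵥ* (S⁻¹.val * A * S.val) = x ᵥ* A ᵥ* S.val := by
  have hx' : x ᵥ* S⁻¹.val = x := by
    conv_lhs => rw [← hx]
    rw [vecMul_vecMul, S.mul_inv, vecMul_one]
  rw [← vecMul_vecMul, ← vecMul_vecMul, hx']

theorem exists_units_conj_row_eq_one (A : Matrix ι ι R) {i j : ι} (hij : i ≠ j)
    (hA : IsUnit (A i j)) :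
    ∃ B : (Matrix ι ι R)ˣ, ∀ q, q ≠ i → (B.val * A * B⁻¹.val) i q = 1 := by
  set c : ι → R := fun q => Ring.inverse (A i j) * (1 - A i q)
  have hAA : A i j * Ring.inverse (A i j) = 1 := Ring.mul_inverse_cancel _ hA
  have hc : IsUnit (1 + c ⬝ᵥ Pi.single j 1) := by
    have hcj : 1 + c j = Ring.inverse (A i j) := by linear_combination -hAA
    rw [dotProduct_single_one, hcj]
    exact hA.ringInverse
  set S := oneAddVecMulVecUnit (Pi.single j 1) c hc
  have hS : Pi.single i 1 ᵥ* S.val = Pi.single i 1 := by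
    simp [S, oneAddVecMulVecUnit, vecMul_add, vecMul_vecMulVec, hij]
  refine ⟨S⁻¹, fun q _ => ?_⟩
  have hrow := congr_fun (vecMul_units_inv_conj_of_vecMul_eq_self hS A) q
  rw [single_one_vecMul, single_one_vecMul] at hrow
  rw [inv_inv]
  refine hrow.trans ?_
  simp only [S, oneAddVecMulVecUnit, c, dotProduct_single, mul_one, vecMul_add, vecMul_one,
    vecMul_vecMulVec, row_apply, Pi.add_apply, Pi.smul_apply, smul_eq_mul]
  linear_combination (1 - A i q) * hAA

theorem exists_units_conj_diag_eq (M : Matrix ι ι R) {i : ι} (hM : ∀ q, q ≠ i → M i q = 1)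
    (γ : ι → R) (hγ : ∑ p, γ p = M.trace) :
    ∃ B : (Matrix ι ι R)ˣ, ∀ p, (B.val * M * B⁻¹.val) p p = γ p := by
  set t : ι → R := fun p => if p = i then 0 else γ p - M p p
  have hti : Pi.single i 1 ⬝ᵥ t = 0 := by simp [t]
  have hsum : M i ⬝ᵥ t = M i i - γ i := by
    have hMt : ∀ s, M i s * t s = t s := fun s => by
      by_cases hs : s = i <;> simp [t, hs, hM]
    calc M i ⬝ᵥ t = ∑ s, t s := Finset.sum_congr rfl fun s _ => hMt s
      _ = ∑ s ∈ Finset.univ.erase i, (γ s - M s s) := by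
        simp [t, Finset.sum_ite, Finset.filter_ne']
      _ = ∑ s, (γ s - M s s) - (γ i - M i i) := Finset.sum_erase_eq_sub (Finset.mem_univ i)
      _ = M i i - γ i := by simp [Finset.sum_sub_distrib, hγ, trace]
  refine ⟨oneAddVecMulVecUnit t (Pi.single i 1) (by simp [hti]), fun p => ?_⟩
  simp only [oneAddVecMulVecUnit, hti, add_zero, Ring.inverse_one, one_smul, add_mul, one_mul,
    vecMulVec_mul, single_vecMul, Units.inv_mk, mul_sub, mul_one, mul_vecMulVec, vecMulVec_mulVec,
    op_smul_eq_smul, smul_vecMulVec, sub_apply, add_apply, vecMulVec_apply, row_apply, smul_apply,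
    smul_eq_mul]
  by_cases hp : p = i
  · subst hp
    simp [t, mulVec, hsum]
  · simp [t, hp, hM p hp]

end Matrix

theorem stmt_7 {F : Type*} [Field F] {n : ℕ}
    (A : Matrix (Fin n) (Fin n) F)
    (hA : ∃ i j, i ≠ j ∧ A i j ≠ 0)
    (γ : Fin n → F) (hγ : ∑ i, γ i = A.trace) :
    ∃ B₁ B₂ : (Matrix (Fin n) (Fin n) F)ˣ,
      ∀ i, (B₂.val * B₁.val * A * B₁⁻¹.val * B₂⁻¹.val) i i = γ i := by
  obtain ⟨i, j, hij, hAij⟩ := hA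
  obtain ⟨B₁, hB₁⟩ := Matrix.exists_units_conj_row_eq_one A hij hAij.isUnit
  obtain ⟨B₂, hB₂⟩ := Matrix.exists_units_conj_diag_eq _ hB₁ γ
    (by rw [hγ, Matrix.trace_units_conj])
  exact ⟨B₁, B₂, fun p => by simpa only [Matrix.mul_assoc] using hB₂ p⟩
end

section
/- Let A be an n×n integer matrix whose first row is (a₁₁, a₁₂, 0, ..., 0, a₁k, a₁,k+1, ..., a₁ₙ) with a₁₂ ≠ 0 and a₁k ≠ 0 for some k ≥ 3. Let m = gcd(a₁₂, a₁k), p = a₁₂/m, q = a₁k/m, and let r, s be integers with p·s − q·r = 1. Let B be the identity matrix modified so that b₂₂ = p, b₂k = q, b_k2 = r, b_kk = s. Then B ∈ GLₙ(ℤ) and the first row of B·A·B⁻¹ is (a₁₁, m, 0, ..., 0, a₁,k+1, ..., a₁ₙ). -/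
/-!
`B` is the identity with the unimodular block `!![p, q; r, s]` placed on the coordinates `1, k`,
and its inverse is the same embedding of the adjugate `!![s, -q; -r, p]`. Since `B` fixes row `0`,
row `0` of `B * A * B⁻¹` is row `0` of `A` times `B⁻¹`, which only changes the columns `1` and `k`:
they become `a₁₂ s - a₁ₖ r = m (p s - q r) = m` and `-a₁₂ q + a₁ₖ p = -m p q + m q p = 0`.
-/

namespace Matrix

variable {ι R : Type*} [DecidableEq ι]

def embedFinTwo [Zero R] [One R] (i j : ι) (M : Matrix (Fin 2) (Fin 2) R) : Matrix ι ι R :=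
  of fun a b =>
    if a = i ∧ b = i then M 0 0
    else if a = i ∧ b = j then M 0 1
    else if a = j ∧ b = i then M 1 0
    else if a = j ∧ b = j then M 1 1
    else (1 : Matrix ι ι R) a b

section Apply

variable [Zero R] [One R] {i j : ι} (M : Matrix (Fin 2) (Fin 2) R)

lemma embedFinTwo_apply_of_ne_left {a : ι} (hai : a ≠ i) (haj : a ≠ j) (b : ι) :
    embedFinTwo i j M a b = (1 : Matrix ι ι R) a b := by
  simp [embedFinTwo, hai, haj]

lemma embedFinTwo_apply_of_ne_right (a : ι) {b : ι} (hbi : b ≠ i) (hbj : b ≠ j) :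
    embedFinTwo i j M a b = (1 : Matrix ι ι R) a b := by
  simp [embedFinTwo, hbi, hbj]

lemma embedFinTwo_one : embedFinTwo i j (1 : Matrix (Fin 2) (Fin 2) R) = 1 := by
  ext a b
  simp only [embedFinTwo, of_apply, one_apply]
  split_ifs <;> grind

end Apply

section Semiring

variable [Fintype ι] [Semiring R] {i j : ι} (M : Matrix (Fin 2) (Fin 2) R)

lemma embedFinTwo_mul_apply_of_ne (X : Matrix ι ι R) {a : ι} (hai : a ≠ i) (haj : a ≠ j)
    (b : ι) : (embedFinTwo i j M * X) a b = X a b := by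
  simp [mul_apply, embedFinTwo_apply_of_ne_left M hai haj, one_apply]

lemma mul_embedFinTwo_apply_of_ne (X : Matrix ι ι R) (a : ι) {b : ι} (hbi : b ≠ i)
    (hbj : b ≠ j) : (X * embedFinTwo i j M) a b = X a b := by
  simp [mul_apply, embedFinTwo_apply_of_ne_right M _ hbi hbj, one_apply]

lemma mul_embedFinTwo_apply_left (hij : i ≠ j) (X : Matrix ι ι R) (a : ι) :
    (X * embedFinTwo i j M) a i = X a i * M 0 0 + X a j * M 1 0 := by
  rw [mul_apply, Finset.sum_eq_add_of_mem i j (Finset.mem_univ _) (Finset.mem_univ _) hij]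
  · simp [embedFinTwo, hij.symm]
  · intro c _ hc
    simp [embedFinTwo, hc.1, hc.2, one_apply]

lemma mul_embedFinTwo_apply_right (hij : i ≠ j) (X : Matrix ι ι R) (a : ι) :
    (X * embedFinTwo i j M) a j = X a i * M 0 1 + X a j * M 1 1 := by
  rw [mul_apply, Finset.sum_eq_add_of_mem i j (Finset.mem_univ _) (Finset.mem_univ _) hij]
  · simp [embedFinTwo, hij.symm]
  · intro c _ hc
    simp [embedFinTwo, hc.1, hc.2, one_apply]
lemma embedFinTwo_mul_embedFinTwo (hij : i ≠ j) (N : Matrix (Fin 2) (Fin 2) R) :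
    embedFinTwo i j M * embedFinTwo i j N = embedFinTwo i j (M * N) := by
  ext a b
  by_cases hb : b = i ∨ b = j
  · rcases hb with hb | hb <;> rw [hb] <;>
      simp only [mul_embedFinTwo_apply_left _ hij, mul_embedFinTwo_apply_right _ hij] <;>
      by_cases hai : a = i <;> by_cases haj : a = j <;>
      simp [embedFinTwo, mul_apply, Fin.sum_univ_two, hai, haj, hij, hij.symm]
  · push Not at hb
    rw [mul_embedFinTwo_apply_of_ne _ _ _ hb.1 hb.2, embedFinTwo_apply_of_ne_right _ _ hb.1 hb.2,
      embedFinTwo_apply_of_ne_right _ _ hb.1 hb.2]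
end Semiring

section CommRing

variable [Fintype ι] [CommRing R] {i j : ι} {M : Matrix (Fin 2) (Fin 2) R}

lemma embedFinTwo_mul_embedFinTwo_adjugate (hij : i ≠ j) (hM : M.det = 1) :
    embedFinTwo i j M * embedFinTwo i j M.adjugate = 1 := by
  rw [embedFinTwo_mul_embedFinTwo _ hij, mul_adjugate, hM, one_smul, embedFinTwo_one]

lemma isUnit_embedFinTwo (hij : i ≠ j) (hM : M.det = 1) : IsUnit (embedFinTwo i j M) :=
  .of_mul_eq_one _ (embedFinTwo_mul_embedFinTwo_adjugate hij hM)

lemma inv_embedFinTwo (hij : i ≠ j) (hM : M.det = 1) :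
    (embedFinTwo i j M)⁻¹ = embedFinTwo i j M.adjugate :=
  inv_eq_right_inv (embedFinTwo_mul_embedFinTwo_adjugate hij hM)

end CommRing

end Matrix

open Matrix

theorem stmt_10_general {n : ℕ}
    (A : Matrix (Fin (n + 3)) (Fin (n + 3)) ℤ)
    (k : Fin (n + 3)) (hk : 1 < k)
    (hzero : ∀ j, 1 < j → j < k → A 0 j = 0)
    (m p q r s : ℤ)
    (hm : m = Int.gcd (A 0 1) (A 0 k))
    (hp : p = A 0 1 / m) (hq : q = A 0 k / m)
    (hbez : p * s - q * r = 1)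
    (B : Matrix (Fin (n + 3)) (Fin (n + 3)) ℤ)
    (hB : B = Matrix.of fun i j =>
      if i = 1 ∧ j = 1 then p
      else if i = 1 ∧ j = k then q
      else if i = k ∧ j = 1 then r
      else if i = k ∧ j = k then s
      else (1 : Matrix (Fin (n + 3)) (Fin (n + 3)) ℤ) i j) :
    IsUnit B ∧
    (B * A * B⁻¹) 0 0 = A 0 0 ∧
    (B * A * B⁻¹) 0 1 = m ∧
    (∀ j, 1 < j → j ≤ k → (B * A * B⁻¹) 0 j = 0) ∧
    (∀ j, k < j → (B * A * B⁻¹) 0 j = A 0 j) := by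
  have hne1k : (1 : Fin (n + 3)) ≠ k := hk.ne
  have hne01 : (0 : Fin (n + 3)) ≠ 1 := Fin.zero_lt_one.ne
  have hne0k : (0 : Fin (n + 3)) ≠ k := (Fin.zero_lt_one.trans hk).ne
  have hdet : (!![p, q; r, s]).det = 1 := by rw [det_fin_two_of, hbez]
  replace hB : B = embedFinTwo 1 k !![p, q; r, s] := hB
  have hrow (j) : (B * A * B⁻¹) 0 j = (A * embedFinTwo 1 k !![s, -q; -r, p]) 0 j := by
    rw [hB, inv_embedFinTwo hne1k hdet, adjugate_fin_two_of, Matrix.mul_assoc,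
      embedFinTwo_mul_apply_of_ne _ _ hne01 hne0k]
  have hmp : m * p = A 0 1 := hp ▸ hm ▸ Int.mul_ediv_cancel' (Int.gcd_dvd_left _ _)
  have hmq : m * q = A 0 k := hq ▸ hm ▸ Int.mul_ediv_cancel' (Int.gcd_dvd_right _ _)
  refine ⟨hB ▸ isUnit_embedFinTwo hne1k hdet, ?_, ?_, ?_, ?_⟩
  · rw [hrow, mul_embedFinTwo_apply_of_ne _ _ _ hne01 hne0k]
  · rw [hrow, mul_embedFinTwo_apply_left _ hne1k, ← hmp, ← hmq]
    simp only [of_apply, cons_val', cons_val_zero, cons_val_one, cons_val_fin_one]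
    linear_combination m * hbez
  · intro j h1j hjk
    rcases hjk.lt_or_eq with hjk | rfl
    · rw [hrow, mul_embedFinTwo_apply_of_ne _ _ _ h1j.ne' hjk.ne, hzero j h1j hjk]
    · rw [hrow, mul_embedFinTwo_apply_right _ hne1k, ← hmp, ← hmq]
      simp only [of_apply, cons_val', cons_val_zero, cons_val_one, cons_val_fin_one]
      ring
  · intro j hkj
    rw [hrow, mul_embedFinTwo_apply_of_ne _ _ _ (hk.trans hkj).ne' hkj.ne']

theorem stmt_10 {n : ℕ}
    (A : Matrix (Fin (n + 3)) (Fin (n + 3)) ℤ)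
    (k : Fin (n + 3)) (hk : 1 < k)
    (h12 : A 0 1 ≠ 0) (h1k : A 0 k ≠ 0)
    (hzero : ∀ j, 1 < j → j < k → A 0 j = 0)
    (m p q r s : ℤ)
    (hm : m = Int.gcd (A 0 1) (A 0 k))
    (hp : p = A 0 1 / m) (hq : q = A 0 k / m)
    (hbez : p * s - q * r = 1)
    (B : Matrix (Fin (n + 3)) (Fin (n + 3)) ℤ)
    (hB : B = Matrix.of fun i j =>
      if i = 1 ∧ j = 1 then p
      else if i = 1 ∧ j = k then q
      else if i = k ∧ j = 1 then r
      else if i = k ∧ j = k then s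
      else (1 : Matrix (Fin (n + 3)) (Fin (n + 3)) ℤ) i j) :
    IsUnit B ∧
    (B * A * B⁻¹) 0 0 = A 0 0 ∧
    (B * A * B⁻¹) 0 1 = m ∧
    (∀ j, 1 < j → j ≤ k → (B * A * B⁻¹) 0 j = 0) ∧
    (∀ j, k < j → (B * A * B⁻¹) 0 j = A 0 j) :=
  stmt_10_general A k hk hzero m p q r s hm hp hq hbez B hB
end

section
/- Let A be an n×n integer matrix such that all off-diagonal entries of some row r equal 1, and let γ₁, ..., γₙ ∈ ℤ with γ₁ + ⋯ + γₙ = tr(A). Then A is similar over ℤ to an integer matrix with diagonal (γ₁, ..., γₙ). -/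
/-!
Put `d k = γ k - A k k` for `k ≠ r` and `d r = 0`, and let `N` be the matrix whose column `r`
is `d` and whose other columns vanish. Since `d r = 0`, `N * N = 0`, so `P = 1 + N` is
unimodular with inverse `1 - N`, and the diagonal of `P * A * P⁻¹ = A + N * A - A * N - N * A * N`
is `A k k + d k * A r k = γ k` off `r`. At `r` it is `A r r - ∑ k, A r k * d k`, and because row
`r` of `A` is all ones off the diagonal this sum is `∑ k ≠ r, (γ k - A k k) = A r r - γ r` by the
trace condition.
-/

open Matrix

section SquareZero

variable {R : Type*} [Ring R] {N : R}

def Units.oneAddOfMulSelfEqZero (hN : N * N = 0) : Rˣ where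
  val := 1 + N
  inv := 1 - N
  val_inv := by rw [← (Commute.one_left N).mul_self_sub_mul_self_eq, hN, mul_one, sub_zero]
  inv_val := by rw [← (Commute.one_left N).mul_self_sub_mul_self_eq', hN, mul_one, sub_zero]

theorem Units.oneAddOfMulSelfEqZero_mul_mul_inv (hN : N * N = 0) (a : R) :
    (oneAddOfMulSelfEqZero hN).val * a * (oneAddOfMulSelfEqZero hN)⁻¹.val =
      a + N * a - a * N - N * a * N := by
  change (1 + N) * a * (1 - N) = _
  noncomm_ring

end SquareZero

namespace Matrix

variable {ι R : Type*} [Fintype ι] [Ring R] {d : ι → R} {r : ι}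

theorem mulVec_apply_eq_sum_of_row_eq_one {A : Matrix ι ι R} (hrow : ∀ k, k ≠ r → A r k = 1)
    (hd : d r = 0) : (A *ᵥ d) r = ∑ k, d k := by
  refine Finset.sum_congr rfl fun k _ => ?_
  rcases eq_or_ne k r with rfl | hk
  · simp [hd]
  · simp [hrow k hk]

variable [DecidableEq ι]

theorem vecMulVec_single_mul_self (hd : d r = 0) :
    vecMulVec d (Pi.single r 1) * vecMulVec d (Pi.single r 1) = 0 := by
  rw [vecMulVec_mul_vecMulVec, single_dotProduct, one_mul, hd, zero_smul]
  ext i j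
  simp [vecMulVec_apply]

theorem oneAdd_vecMulVec_single_conj_apply_self (hd : d r = 0) (A : Matrix ι ι R) (i : ι) :
    ((Units.oneAddOfMulSelfEqZero (vecMulVec_single_mul_self hd)).val * A *
        (Units.oneAddOfMulSelfEqZero (vecMulVec_single_mul_self hd))⁻¹.val) i i =
      A i i + d i * A r i - (A *ᵥ d) i * (Pi.single r 1 : ι → R) i := by
  rw [Units.oneAddOfMulSelfEqZero_mul_mul_inv]
  simp only [sub_apply, add_apply, vecMulVec_mul, mul_vecMulVec, vecMulVec_apply,
    single_one_vecMul, row_apply]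
  rcases eq_or_ne i r with rfl | hi
  · simp [hd, vecMulVec_mulVec]
  · simp [hi]

theorem sum_update_sub_diag_of_sum_eq_trace {R : Type*} [CommRing R] (A : Matrix ι ι R)
    {γ : ι → R} (hγ : ∑ i, γ i = A.trace) (r : ι) :
    ∑ k, Function.update (γ - A.diag) r 0 k = A r r - γ r := by
  rw [Finset.sum_update_of_mem (Finset.mem_univ r), zero_add,
    Finset.sum_sdiff_eq_sub (Finset.subset_univ _), Finset.sum_singleton]
  simp only [Pi.sub_apply, Finset.sum_sub_distrib, hγ, trace, diag_apply]
  ring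

end Matrix

theorem stmt_17_general {n : ℕ}
    (A : Matrix (Fin n) (Fin n) ℤ) (r : Fin n)
    (hrow : ∀ k, k ≠ r → A r k = 1)
    (γ : Fin n → ℤ) (hγ : ∑ i, γ i = A.trace) :
    ∃ P : (Matrix (Fin n) (Fin n) ℤ)ˣ, ∀ i, (P.val * A * P⁻¹.val) i i = γ i := by
  set d := Function.update (γ - A.diag) r 0
  have hdr : d r = 0 := Function.update_self r 0 _
  refine ⟨Units.oneAddOfMulSelfEqZero (vecMulVec_single_mul_self hdr), fun i => ?_⟩
  rw [oneAdd_vecMulVec_single_conj_apply_self hdr]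
  rcases eq_or_ne i r with rfl | hi
  · rw [mulVec_apply_eq_sum_of_row_eq_one hrow hdr, sum_update_sub_diag_of_sum_eq_trace A hγ]
    simp [hdr]
  · simp [d, hi, hrow i hi]

theorem stmt_17 {n : ℕ} (hn : 2 ≤ n)
    (A : Matrix (Fin n) (Fin n) ℤ) (r : Fin n)
    (hrow : ∀ k, k ≠ r → A r k = 1)
    (γ : Fin n → ℤ) (hγ : ∑ i, γ i = A.trace) :
    ∃ P : (Matrix (Fin n) (Fin n) ℤ)ˣ, ∀ i, (P.val * A * P⁻¹.val) i i = γ i :=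
  stmt_17_general A r hrow γ hγ
end
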